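/- arXiv:1503.02511 — 3 statements merged into one kernel-verified Lean document; each statement's English description precedes it below -/
import Mathlib

section
/- Let V be a finite-dimensional real inner product space, let W_1, ..., W_k be linear subspaces of V, and let K ⊆ V be a compact subset. Then for every nonzero vector v ∈ V such that v ∉ W_i for all 1 ≤ i ≤ k, there exists a real scalar λ such that the translate K + λv is contained in V \ (W_1 ∪ ... ∪ W_k), i.e. x + λ • v ∉ W_i for every x ∈ K and every 1 ≤ i ≤ k. -/
open Bornology Filter

theorem Submodule.eventually_cobounded_forall_add_smul_notMem
    {𝕜 E : Type*} [NontriviallyNormedField 𝕜] [CompleteSpace 𝕜]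
    [NormedAddCommGroup E] [NormedSpace 𝕜 E] [FiniteDimensional 𝕜 E]
    (W : Submodule 𝕜 E) {K : Set E} (hK : IsCompact K) {v : E} (hv : v ∉ W) :
    ∀ᶠ t in cobounded 𝕜, ∀ x ∈ K, x + t • v ∉ W := by
  obtain ⟨f, hfv, hfW⟩ := W.exists_dual_map_eq_bot_of_notMem hv inferInstance
  -- `x + t • v ∈ W` forces `f x + t * f v = 0`, so `t` lies in a compact image of `K`
  have hbad : IsBounded ((fun x => -f x / f v) '' K) :=
    (hK.image ((continuous_neg.comp f.continuous_of_finiteDimensional).div_const _)).isBounded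
  filter_upwards [isBounded_def.1 hbad] with t ht x hx hmem
  refine ht ⟨x, hx, ?_⟩
  have hfx : f (x + t • v) = 0 := LinearMap.le_ker_iff_map.2 hfW hmem
  rw [map_add, map_smul, smul_eq_mul] at hfx
  rw [div_eq_iff hfv]
  linear_combination -hfx

theorem translate_compact_avoids_subspaces_general
    {V : Type*} [NormedAddCommGroup V] [InnerProductSpace ℝ V] [FiniteDimensional ℝ V]
    {k : ℕ} (W : Fin k → Submodule ℝ V)
    (K : Set V) (hK : IsCompact K)
    (v : V) (hvW : ∀ i, v ∉ W i) :
    ∃ lam : ℝ, ∀ x ∈ K, ∀ i, x + lam • v ∉ W i :=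
  (eventually_all.2 fun i =>
      (W i).eventually_cobounded_forall_add_smul_notMem hK (hvW i)).exists.imp
    fun _ h x hx i => h i x hx

/-- **Translation lemma** (Lemma 4.2 of the paper).
Let `V` be a finite-dimensional real inner product (Euclidean) space,
`W 1, ..., W k` linear subspaces of `V`, and `K ⊆ V` a compact subset.
Then for every nonzero vector `v ∈ V` with `v ∉ W i` for all `i`, there exists
a scalar `λ` such that the translate `K + λ • v` avoids all the subspaces `W i`. -/
theorem translate_compact_avoids_subspaces
    {V : Type*} [NormedAddCommGroup V] [InnerProductSpace ℝ V] [FiniteDimensional ℝ V]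
    {k : ℕ} (W : Fin k → Submodule ℝ V)
    (K : Set V) (hK : IsCompact K)
    (v : V) (hv : v ≠ 0) (hvW : ∀ i, v ∉ W i) :
    ∃ lam : ℝ, ∀ x ∈ K, ∀ i, x + lam • v ∉ W i :=
  translate_compact_avoids_subspaces_general W K hK v hvW
end

section
/- Let V be a finite-dimensional real inner product space, let W_1, ..., W_k be linear subspaces of V, let K ⊆ V be a compact subset, and let v ∈ V be a nonzero vector with v ∉ W_i for all 1 ≤ i ≤ k. Then there exists λ₀ ∈ ℝ such that for every real λ ≥ λ₀ and every x ∈ K, the vector x + λ • v does not belong to any W_i; that is, K + λv ⊆ V \ (W_1 ∪ ... ∪ W_k) for all λ ≥ λ₀. -/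
/-!
If `x + λ • v` lies in a subspace `W`, then so does `v + λ⁻¹ • x`, hence `v` is within
`‖x‖ / λ` of `W`. For a closed `W ∌ v` this distance is positive, so once `λ` exceeds
`sup ‖K‖ / infDist v W` no point of `K + λ • v` lies in `W`; finitely many subspaces
only require taking the largest of these thresholds.
-/

open Filter Metric

theorem Submodule.infDist_le_norm_div_of_add_smul_mem {E : Type*} [SeminormedAddCommGroup E]
    [NormedSpace ℝ E] (W : Submodule ℝ E) {x v : E} {lam : ℝ} (hlam : 0 < lam)
    (hmem : x + lam • v ∈ W) : infDist v W ≤ ‖x‖ / lam := by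
  have hw : v + lam⁻¹ • x ∈ W := by
    convert W.smul_mem lam⁻¹ hmem using 1
    rw [smul_add, smul_smul, inv_mul_cancel₀ hlam.ne', one_smul, add_comm]
  calc infDist v W ≤ dist v (v + lam⁻¹ • x) := infDist_le_dist_of_mem hw
    _ = ‖x‖ / lam := by
      rw [dist_self_add_right, norm_smul, norm_inv, Real.norm_of_nonneg hlam.le, inv_mul_eq_div]

theorem Submodule.eventually_forall_add_smul_notMem {E : Type*} [SeminormedAddCommGroup E]
    [NormedSpace ℝ E] {W : Submodule ℝ E} (hW : IsClosed (W : Set E)) {K : Set E}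
    (hK : Bornology.IsBounded K) {v : E} (hv : v ∉ W) :
    ∀ᶠ lam : ℝ in atTop, ∀ x ∈ K, x + lam • v ∉ W := by
  have hd : 0 < infDist v W := (hW.notMem_iff_infDist_pos ⟨0, W.zero_mem⟩).1 hv
  obtain ⟨M, hM⟩ := hK.exists_norm_le
  filter_upwards [eventually_gt_atTop 0, eventually_gt_atTop (M / infDist v W)]
    with lam hlam hlarge x hx hmem
  have hM_lt : M < infDist v W * lam := by rwa [div_lt_iff₀' hd] at hlarge
  have hdist := W.infDist_le_norm_div_of_add_smul_mem hlam hmem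
  rw [le_div_iff₀ hlam] at hdist
  linarith [hM x hx]

theorem translate_compact_avoids_subspaces_eventually_general
    {V : Type*} [NormedAddCommGroup V] [InnerProductSpace ℝ V] [FiniteDimensional ℝ V]
    {k : ℕ} (W : Fin k → Submodule ℝ V)
    (K : Set V) (hK : IsCompact K)
    (v : V) (hvW : ∀ i, v ∉ W i) :
    ∃ lam₀ : ℝ, ∀ lam : ℝ, lam₀ ≤ lam → ∀ x ∈ K, ∀ i, x + lam • v ∉ W i := by
  have hW : ∀ i, ∀ᶠ lam in atTop, ∀ x ∈ K, x + lam • v ∉ W i := fun i =>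
    Submodule.eventually_forall_add_smul_notMem (W i).closed_of_finiteDimensional
      hK.isBounded (hvW i)
  obtain ⟨lam₀, hlam₀⟩ := eventually_atTop.1 (eventually_all.2 hW)
  exact ⟨lam₀, fun lam hlam x hx i => hlam₀ lam hlam i x hx⟩

/-- **Translation lemma, strengthened form**: for all sufficiently large `λ`,
the translate `K + λ • v` of the compact set `K` avoids each of the subspaces
`W 1, ..., W k`, provided the nonzero vector `v` lies in none of them. -/
theorem translate_compact_avoids_subspaces_eventually
    {V : Type*} [NormedAddCommGroup V] [InnerProductSpace ℝ V] [FiniteDimensional ℝ V]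
    {k : ℕ} (W : Fin k → Submodule ℝ V)
    (K : Set V) (hK : IsCompact K)
    (v : V) (hv : v ≠ 0) (hvW : ∀ i, v ∉ W i) :
    ∃ lam₀ : ℝ, ∀ lam : ℝ, lam₀ ≤ lam → ∀ x ∈ K, ∀ i, x + lam • v ∉ W i :=
  translate_compact_avoids_subspaces_eventually_general W K hK v hvW
end

section
/- Let 𝔨 be a finite-dimensional real Lie algebra whose Killing form B_𝔨 is nondegenerate, let 𝔥 ⊆ 𝔨 be a Lie subalgebra such that the restriction B_𝔥 of B_𝔨 to 𝔥 is nondegenerate, and let 𝔪 = { X ∈ 𝔨 : B_𝔨(X, Y) = 0 for all Y ∈ 𝔥 }, so that 𝔨 = 𝔥 ⊕ 𝔪; denote by P_𝔥 : 𝔨 → 𝔥 the projection onto 𝔥 along 𝔪, and for Z ∈ 𝔨 write Z_𝔥 = P_𝔥(Z). Let 𝔤 be a Lie algebra, λ : 𝔥 → 𝔤 a linear map, and v ∈ 𝔤* a linear functional; let X_v^λ ∈ 𝔥 be the unique element satisfying B_𝔥(X_v^λ, Y) = v(λ(Y)) for all Y ∈ 𝔥. Then for all X, Y ∈ 𝔪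 one has v(λ(⁅X, Y⁆_𝔥)) = B_𝔨(X_v^λ, ⁅X, Y⁆). Consequently, the bilinear form (X, Y) ↦ v(λ(⁅X, Y⁆_𝔥)) on 𝔪 is nondegenerate if and only if the bilinear form (X, Y) ↦ B_𝔨(X_v^λ, ⁅X, Y⁆) on 𝔪 is nondegenerate. -/
/-! Splitting `Z = P Z + (Z - P Z)` with `Z - P Z ∈ 𝔪`, the second summand pairs to zero with
`X_v^λ ∈ 𝔥` because the Killing form is symmetric, while the first pairing is `v (λ (P Z))` by the
definition of `X_v^λ`. So `v (λ (Z_𝔥)) = B_𝔨(X_v^λ, Z)` holds for every `Z ∈ 𝔨`, not only for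
brackets of elements of `𝔪`. -/

theorem LinearMap.IsRefl.apply_eq_apply_of_sub_mem_orthogonal {R M N : Type*} [CommRing R]
    [AddCommGroup M] [Module R M] [AddCommGroup N] [Module R N] {B : M →ₗ[R] M →ₗ[R] N}
    (hB : B.IsRefl) {H : Set M} {m : Submodule R M} (hm : ∀ x ∈ m, ∀ y ∈ H, B x y = 0)
    {P : M → M} (hP : ∀ z, z - P z ∈ m) {x : M} (hx : x ∈ H) (z : M) :
    B x z = B x (P z) := by
  rw [← sub_eq_zero, ← map_sub]
  exact hB _ _ (hm _ (hP z) x hx)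

theorem fatness_form_eq_killing_form_general
    {k g : Type*} [LieRing k] [LieAlgebra ℝ k] [Module.Finite ℝ k]
    [LieRing g] [LieAlgebra ℝ g]
    (H : LieSubalgebra ℝ k)
    (m : Submodule ℝ k)
    (hm : ∀ X : k, X ∈ m ↔ ∀ Y ∈ H, killingForm ℝ k X Y = 0)
    (P : k →ₗ[ℝ] k) (hPmem : ∀ Z : k, P Z ∈ H) (hPcompl : ∀ Z : k, Z - P Z ∈ m)
    (lam : H →ₗ[ℝ] g) (v : g →ₗ[ℝ] ℝ)
    (Xv : k) (hXvmem : Xv ∈ H)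
    (hXv : ∀ Y : H, killingForm ℝ k Xv (Y : k) = v (lam Y)) :
    (∀ X ∈ m, ∀ Y ∈ m,
        v (lam ⟨P ⁅X, Y⁆, hPmem ⁅X, Y⁆⟩) = killingForm ℝ k Xv ⁅X, Y⁆) ∧
      ((∀ X ∈ m, (∀ Y ∈ m, v (lam ⟨P ⁅X, Y⁆, hPmem ⁅X, Y⁆⟩) = 0) → X = 0) ↔
        (∀ X ∈ m, (∀ Y ∈ m, killingForm ℝ k Xv ⁅X, Y⁆ = 0) → X = 0)) := by
  have key (Z : k) : v (lam ⟨P Z, hPmem Z⟩) = killingForm ℝ k Xv Z :=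
    (hXv _).symm.trans <| Eq.symm <|
      (LieModule.traceForm_isSymm ℝ k k).isRefl.apply_eq_apply_of_sub_mem_orthogonal
        (H := H) (fun X hX => (hm X).mp hX) hPcompl hXvmem Z
  exact ⟨fun X _ Y _ => key ⁅X, Y⁆,
    forall₂_congr fun X _ => imp_congr_left <| forall₂_congr fun Y _ => by rw [key]⟩

/-- **Computational content of Theorem 5.4 of the paper.**
Let `𝔨` be a finite-dimensional real Lie algebra with nondegenerate Killing
form `B_𝔨`, `𝔥 ⊆ 𝔨` a subalgebra on which `B_𝔨` restricts nondegenerately, and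
`𝔪` the `B_𝔨`-orthogonal complement of `𝔥`, so that `𝔨 = 𝔥 ⊕ 𝔪`; let
`P : 𝔨 → 𝔨` be the projection onto `𝔥` along `𝔪` (so `Z_𝔥 = P Z`).  Let `𝔤` be
a Lie algebra, `λ : 𝔥 → 𝔤` a linear map, `v ∈ 𝔤*`, and `X_v^λ ∈ 𝔥` the unique
element with `B_𝔨(X_v^λ, Y) = v(λ Y)` for all `Y ∈ 𝔥`.  Then for `X, Y ∈ 𝔪`
one has `v(λ(⁅X,Y⁆_𝔥)) = B_𝔨(X_v^λ, ⁅X,Y⁆)`; consequently the bilinear form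
`(X,Y) ↦ v(λ(⁅X,Y⁆_𝔥))` on `𝔪` is nondegenerate iff the form
`(X,Y) ↦ B_𝔨(X_v^λ, ⁅X,Y⁆)` on `𝔪` is. -/
theorem fatness_form_eq_killing_form
    {k g : Type*} [LieRing k] [LieAlgebra ℝ k] [Module.Finite ℝ k]
    [LieRing g] [LieAlgebra ℝ g]
    (hk_nondeg : ∀ X : k, (∀ Y : k, killingForm ℝ k X Y = 0) → X = 0)
    (H : LieSubalgebra ℝ k)
    (hH_nondeg : ∀ X ∈ H, (∀ Y ∈ H, killingForm ℝ k X Y = 0) → X = 0)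
    (m : Submodule ℝ k)
    (hm : ∀ X : k, X ∈ m ↔ ∀ Y ∈ H, killingForm ℝ k X Y = 0)
    (P : k →ₗ[ℝ] k) (hPmem : ∀ Z : k, P Z ∈ H) (hPcompl : ∀ Z : k, Z - P Z ∈ m)
    (lam : H →ₗ[ℝ] g) (v : g →ₗ[ℝ] ℝ)
    (Xv : k) (hXvmem : Xv ∈ H)
    (hXv : ∀ Y : H, killingForm ℝ k Xv (Y : k) = v (lam Y)) :
    (∀ X ∈ m, ∀ Y ∈ m,
        v (lam ⟨P ⁅X, Y⁆, hPmem ⁅X, Y⁆⟩) = killingForm ℝ k Xv ⁅X, Y⁆) ∧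
      ((∀ X ∈ m, (∀ Y ∈ m, v (lam ⟨P ⁅X, Y⁆, hPmem ⁅X, Y⁆⟩) = 0) → X = 0) ↔
        (∀ X ∈ m, (∀ Y ∈ m, killingForm ℝ k Xv ⁅X, Y⁆ = 0) → X = 0)) :=
  fatness_form_eq_killing_form_general H m hm P hPmem hPcompl lam v Xv hXvmem hXv
end
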